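/- For unitaries U_{ij} (1 ≤ i < j ≤ K) on a finite-dimensional Hilbert space, if the K×K block matrix P with identity diagonal blocks, (i,j) block U_{ij} for i < j, and (j,i) block U_{ij}†, is positive semi-definite, then there exist unitaries V₁, ..., V_K such that U_{ij} = V_i V_j† for all i < j (equivalently, the cocycle condition U_{ik} = U_{ij} U_{jk} holds for all i < j < k). -/

import Mathlib

open Matrix Kronecker Finset ComplexOrder

noncomputable section
open scoped Classical

/-- The positive semidefinite square root (removed from Mathlib; old definition restored). -/
def Matrix.PosSemidef.sqrt {n : Type*} [Fintype n] [DecidableEq n] {𝕜 : Type*} [RCLike 𝕜]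
    {A : Matrix n n 𝕜} (hA : A.PosSemidef) : Matrix n n 𝕜 :=
  hA.1.eigenvectorUnitary.1 * diagonal ((↑) ∘ (√·) ∘ hA.1.eigenvalues) *
    (star hA.1.eigenvectorUnitary : Matrix n n 𝕜)

/-- Square root of a matrix: the PSD square root if the matrix is PSD, else 0. -/
def mSqrt {m : Type*} [Fintype m] [DecidableEq m] (A : Matrix m m ℂ) : Matrix m m ℂ :=

  if h : A.PosSemidef then h.sqrt else 0

/-- Operator absolute value `|A| = √(Aᴴ A)`. -/
def mAbs {m : Type*} [Fintype m] [DecidableEq m] (A : Matrix m m ℂ) : Matrix m m ℂ :=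
  (Matrix.posSemidef_conjTranspose_mul_self A).sqrt

/-- Von Neumann entropy (base-2), via eigenvalues of a Hermitian matrix. -/
def vnEntropy {m : Type*} [Fintype m] [DecidableEq m] (ρ : Matrix m m ℂ) : ℝ :=
  if h : ρ.IsHermitian then -∑ i, (h.eigenvalues i) * Real.logb 2 (h.eigenvalues i) else 0

/-- Partial trace over the first tensor factor. -/
def ptraceA {m p : Type*} [Fintype m] [Fintype p] (X : Matrix (m × p) (m × p) ℂ) :
    Matrix p p ℂ := Matrix.of fun a b => ∑ k, X (k, a) (k, b)

/-- Partial trace over the second tensor factor. -/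
def ptraceB {m p : Type*} [Fintype m] [Fintype p] (X : Matrix (m × p) (m × p) ℂ) :
    Matrix m m ℂ := Matrix.of fun a b => ∑ k, X (a, k) (b, k)

/-- Fidelity `F(ρ,σ) = (Tr |√ρ √σ|)²`. -/
def fidelity {m : Type*} [Fintype m] [DecidableEq m] (ρ σ : Matrix m m ℂ) : ℝ :=
  ((mAbs (mSqrt ρ * mSqrt σ)).trace.re) ^ 2

/-! The PSD matrix `P` is a Gram matrix `Gᴴ G`; write `Gₖ` for the `k`-th block column of `G`, so
that `Pₖₗ = Gₖᴴ Gₗ` and each `Gₖ` is an isometry. For isometries `A`, `C` with `W = Cᴴ A` unitary,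
`(A - C W)ᴴ (A - C W) = 1 - Wᴴ W = 0`, so `A = C W`. Fixing a base index `o`, this gives
`Gₗ = G_o P_{o l}`, hence `Pₖₗ = P_{k o} P_{o l}` and one can take `Vₖ = P_{k o}`. -/

open scoped MatrixOrder

namespace Matrix

variable {𝕜 : Type*} [RCLike 𝕜]

theorem PosSemidef.exists_eq_conjTranspose_mul_self {n : Type*} [Fintype n] [DecidableEq n]
    {A : Matrix n n 𝕜} (hA : A.PosSemidef) : ∃ G : Matrix n n 𝕜, A = Gᴴ * G :=
  ⟨CFC.sqrt A, by
    rw [(CFC.sqrt_nonneg A).posSemidef.isHermitian.eq, CFC.sqrt_mul_sqrt_self A hA.nonneg]⟩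

theorem eq_mul_conjTranspose_mul_of_unitary {N m : Type*} [Fintype N] [Fintype m]
    [DecidableEq m] {A C : Matrix N m 𝕜} (hA : Aᴴ * A = 1) (hC : Cᴴ * C = 1)
    (hW : Cᴴ * A ∈ unitaryGroup m 𝕜) : A = C * (Cᴴ * A) := by
  have hWW : (Cᴴ * A)ᴴ * (Cᴴ * A) = 1 := mem_unitaryGroup_iff'.mp hW
  rw [← sub_eq_zero, ← conjTranspose_mul_self_eq_zero]
  calc (A - C * (Cᴴ * A))ᴴ * (A - C * (Cᴴ * A))
      = Aᴴ * A - (Cᴴ * A)ᴴ * (Cᴴ * A) - (Cᴴ * A)ᴴ * (Cᴴ * A)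
          + (Cᴴ * A)ᴴ * (Cᴴ * C) * (Cᴴ * A) := by
        simp only [conjTranspose_sub, conjTranspose_mul, conjTranspose_conjTranspose,
          Matrix.mul_sub, Matrix.sub_mul, Matrix.mul_assoc]
        abel
    _ = 0 := by rw [hA, hC, hWW, Matrix.mul_one, hWW]; abel

theorem submatrix_conjTranspose_mul_self {N ι m : Type*} [Fintype N] (G : Matrix N (ι × m) 𝕜)
    (k l : ι) :
    (Gᴴ * G).submatrix (Prod.mk k) (Prod.mk l) =
      (G.submatrix id (Prod.mk k))ᴴ * G.submatrix id (Prod.mk l) := by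
  rw [submatrix_mul _ _ _ id _ Function.bijective_id, conjTranspose_submatrix]

theorem PosSemidef.exists_unitary_submatrix_prodMk_eq {ι m : Type*} [Fintype ι] [DecidableEq ι]
    [Fintype m] [DecidableEq m] {P : Matrix (ι × m) (ι × m) 𝕜} (hP : P.PosSemidef)
    (hdiag : ∀ k, P.submatrix (Prod.mk k) (Prod.mk k) = 1)
    (hunit : ∀ k l, P.submatrix (Prod.mk k) (Prod.mk l) ∈ unitaryGroup m 𝕜) :
    ∃ V : ι → Matrix m m 𝕜, (∀ k, V k ∈ unitaryGroup m 𝕜) ∧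
      ∀ k l, P.submatrix (Prod.mk k) (Prod.mk l) = V k * (V l)ᴴ := by
  rcases isEmpty_or_nonempty ι with hι | ⟨⟨o⟩⟩
  · exact ⟨isEmptyElim, isEmptyElim, isEmptyElim⟩
  obtain ⟨G, rfl⟩ := hP.exists_eq_conjTranspose_mul_self
  let Gcol : ι → Matrix (ι × m) m 𝕜 := fun k => G.submatrix id (Prod.mk k)
  have hblock (k l : ι) : (Gᴴ * G).submatrix (Prod.mk k) (Prod.mk l) = (Gcol k)ᴴ * Gcol l :=
    submatrix_conjTranspose_mul_self G k l
  refine ⟨fun k => (Gᴴ * G).submatrix (Prod.mk k) (Prod.mk o), fun k => hunit k o, fun k l => ?_⟩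
  have hrange : Gcol l = Gcol o * ((Gcol o)ᴴ * Gcol l) := by
    refine eq_mul_conjTranspose_mul_of_unitary ?_ ?_ ?_ <;> rw [← hblock]
    exacts [hdiag l, hdiag o, hunit o l]
  simp only [hblock]
  rw [conjTranspose_mul, conjTranspose_conjTranspose, Matrix.mul_assoc, ← hrange]

end Matrix

theorem stmt13_general (n K : ℕ)
    (U : Fin K → Fin K → Matrix (Fin n) (Fin n) ℂ)
    (hunit : ∀ i j, i < j → U i j ∈ Matrix.unitaryGroup (Fin n) ℂ)
    (hPSD : (Matrix.of fun x y : Fin K × Fin n =>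
      (if x.1 = y.1 then (1 : Matrix (Fin n) (Fin n) ℂ)
        else if x.1 < y.1 then U x.1 y.1 else (U y.1 x.1)ᴴ) x.2 y.2).PosSemidef) :
    ∃ V : Fin K → Matrix (Fin n) (Fin n) ℂ,
      (∀ i, V i ∈ Matrix.unitaryGroup (Fin n) ℂ) ∧
      ∀ i j, i < j → U i j = V i * (V j)ᴴ := by
  have hblock_unitary (k l : Fin K) :
      (if k = l then 1 else if k < l then U k l else (U l k)ᴴ) ∈ unitaryGroup (Fin n) ℂ := by
    split_ifs with hkl hlt
    · exact one_mem _
    · exact hunit k l hlt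
    · exact Unitary.star_mem (hunit l k (by omega))
  obtain ⟨V, hV, hVblock⟩ :=
    hPSD.exists_unitary_submatrix_prodMk_eq (fun k => by ext; simp) hblock_unitary
  refine ⟨V, hV, fun i j hij => ?_⟩
  simpa [← Matrix.ext_iff, hij.ne, hij] using hVblock i j

/-- A PSD K×K block matrix with identity diagonal and unitary off-diagonal blocks has
blocks of the form `Vᵢ Vⱼᴴ`. -/
theorem stmt13 (n K : ℕ) (hK : 3 ≤ K)
    (U : Fin K → Fin K → Matrix (Fin n) (Fin n) ℂ)
    (hunit : ∀ i j, i < j → U i j ∈ Matrix.unitaryGroup (Fin n) ℂ)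
    (hPSD : (Matrix.of fun x y : Fin K × Fin n =>
      (if x.1 = y.1 then (1 : Matrix (Fin n) (Fin n) ℂ)
        else if x.1 < y.1 then U x.1 y.1 else (U y.1 x.1)ᴴ) x.2 y.2).PosSemidef) :
    ∃ V : Fin K → Matrix (Fin n) (Fin n) ℂ,
      (∀ i, V i ∈ Matrix.unitaryGroup (Fin n) ℂ) ∧
      ∀ i j, i < j → U i j = V i * (V j)ᴴ :=
  stmt13_general n K U hunit hPSD
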